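/- arXiv:1610.01839 — 2 statements merged into one kernel-verified Lean document; each statement's English description precedes it below -/
import Mathlib

section
/- Let G = (V,E) be a graph and let Ori(G) be the set of the 2^{|E|} digraphs obtained from G by choosing, for each edge {u,v}, one of the two arcs (u,v) or (v,u). Then Σ_{D' ∈ Ori(G)} B_{D'}(q,y,z) = 2^{|E|} · P_G(q, (y+z)/2); equivalently, for every positive integer q, Σ_{D' ∈ Ori(G)} Σ_{f : V → {1,…,q}} y^{(number of ascents of f in D')} z^{(number of descents of f in D')} = Σ_{f : V → {1,…,q}} (y+z)^{(number of bichromatic edges of f)} · 2^{(number of monochromatic edges of f)}. -/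
/-!
For a fixed coloring, the weight `y ^ #ascents * z ^ #descents` factors over the arcs, so the sum
over orientations factors over the edges. Both orientations of an edge together contribute
`y + z` if the edge is bichromatic and `2` if it is monochromatic, i.e. `2 * ((y + z) / 2)` resp.
`2 * 1`; this is `2 ^ |E|` times the Potts weight at `(y + z) / 2`. Both sides of the theorem
are polynomial in `q` and agree at every positive integer, hence everywhere.
-/

open Finset Polynomial

/-- The sum over all `q`-colorings of a digraph of
`y ^ (number of ascents) * z ^ (number of descents)`. -/
def colorSum (V A : Type) [Fintype V] [DecidableEq V] [Fintype A]
    (s t : A → V) (q : ℕ) (y z : ℚ) : ℚ :=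
  ∑ f : V → Fin q,
    y ^ (Finset.univ.filter (fun a => f (s a) < f (t a))).card *
    z ^ (Finset.univ.filter (fun a => f (t a) < f (s a))).card

lemma pow_card_filter_eq_prod_ite {ι M : Type*} [Fintype ι] [CommMonoid M] (p : ι → Prop)
    [DecidablePred p] (y : M) : y ^ #{i | p i} = ∏ i, if p i then y else 1 := by
  rw [← prod_const, prod_filter]

section ArcWeight

variable {α R : Type*} [LinearOrder α]

def arcWeight [MulOneClass R] (y z : R) (i j : α) : R :=
  (if i < j then y else 1) * (if j < i then z else 1)

lemma pow_card_ascents_mul_pow_card_descents_eq_prod_arcWeight [CommMonoid R]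
    {V A : Type*} [Fintype A] (s t : A → V) (f : V → α) (y z : R) :
    y ^ #{a | f (s a) < f (t a)} * z ^ #{a | f (t a) < f (s a)} =
      ∏ a, arcWeight y z (f (s a)) (f (t a)) := by
  rw [pow_card_filter_eq_prod_ite, pow_card_filter_eq_prod_ite, ← prod_mul_distrib]
  rfl

lemma arcWeight_add_arcWeight_swap [CommSemiring R] (y z : R) (i j : α) :
    arcWeight y z i j + arcWeight y z j i = if i = j then 2 else y + z := by
  unfold arcWeight
  rcases lt_trichotomy i j with h | rfl | h
  · simp [h, h.ne, h.not_gt]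
  · simp [one_add_one_eq_two]
  · simp [h, h.ne', h.not_gt, add_comm]

lemma sum_orientations_prod_arcWeight [CommSemiring R] {V E : Type*} [Fintype E] [DecidableEq E]
    (e1 e2 : E → V) (f : V → α) (y z : R) :
    ∑ ε : E → Bool, ∏ e, arcWeight y z (f (if ε e then e1 e else e2 e))
        (f (if ε e then e2 e else e1 e)) =
      ∏ e, if f (e1 e) = f (e2 e) then 2 else y + z := by
  rw [← Fintype.prod_sum fun e (b : Bool) =>
    arcWeight y z (f (if b then e1 e else e2 e)) (f (if b then e2 e else e1 e))]
  simp only [Fintype.sum_bool, if_true, Bool.false_eq_true, if_false,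
    arcWeight_add_arcWeight_swap]

end ArcWeight

lemma prod_ite_two_eq_two_pow_mul {ι K : Type*} [Fintype ι] [Field K] [NeZero (2 : K)]
    (p : ι → Prop) [DecidablePred p] (w : K) :
    ∏ i, (if p i then 2 else w) = 2 ^ Fintype.card ι * (w / 2) ^ #{i | ¬ p i} := by
  have factor : ∀ i, (if p i then 2 else w) = 2 * if ¬ p i then w / 2 else 1 := fun i => by
    split_ifs <;> field_simp
  simp only [factor, prod_mul_distrib, prod_const, card_univ, pow_card_filter_eq_prod_ite]

theorem sum_colorSum_orientations (V E : Type) [Fintype V] [DecidableEq V] [Fintype E]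
    [DecidableEq E] (e1 e2 : E → V) (q : ℕ) (y z : ℚ) :
    ∑ ε : E → Bool, colorSum V E (fun e => if ε e then e1 e else e2 e)
        (fun e => if ε e then e2 e else e1 e) q y z =
      2 ^ Fintype.card E * ∑ f : V → Fin q, ((y + z) / 2) ^ #{e | f (e1 e) ≠ f (e2 e)} := by
  unfold colorSum
  rw [sum_comm, mul_sum]
  refine sum_congr rfl fun f _ => ?_
  simp only [pow_card_ascents_mul_pow_card_descents_eq_prod_arcWeight]
  rw [sum_orientations_prod_arcWeight, prod_ite_two_eq_two_pow_mul]

lemma Polynomial.eq_of_eval_natCast_eq {R : Type*} [CommRing R] [IsDomain R] [CharZero R]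
    {p q : R[X]} (h : ∀ n : ℕ, 0 < n → p.eval (n : R) = q.eval (n : R)) : p = q := by
  refine eq_of_infinite_eval_eq p q ?_
  refine Set.infinite_of_injective_forall_mem (f := fun n : ℕ => ((n + 1 : ℕ) : R)) ?_ ?_
  · exact fun a b hab => Nat.succ_injective (Nat.cast_injective hab)
  · exact fun n => h (n + 1) n.succ_pos

lemma MvPolynomial.eval_vecCons {R : Type*} [CommSemiring R] {n : ℕ} (x : R) (v : Fin n → R)
    (p : MvPolynomial (Fin (n + 1)) R) :
    eval (Matrix.vecCons x v) p = ((finSuccEquiv R n p).map (eval v)).eval x :=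
  eval_eq_eval_mv_eval' v x p

/-- for a graph `G = (V,E)` (edges given by endpoint maps `e1 e2 : E → V`),
orientations of `G` are indexed by `ε : E → Bool` (choosing for each edge one of its two
directions).  If `B ε` is the B-polynomial of the orientation determined by `ε` and `P` is
the Potts polynomial of `G`, then `Σ_{ε} B_ε(q,y,z) = 2^{|E|} · P_G(q, (y+z)/2)`. -/
theorem sum_B_orientations_eq_potts (V E : Type) [Fintype V] [DecidableEq V]
    [Fintype E] [DecidableEq E]
    (e1 e2 : E → V)
    (B : (E → Bool) → MvPolynomial (Fin 3) ℚ)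
    (hB : ∀ ε : E → Bool, ∀ q : ℕ, 0 < q → ∀ y z : ℚ,
      MvPolynomial.eval ![(q : ℚ), y, z] (B ε) =
        colorSum V E
          (fun e => if ε e then e1 e else e2 e)
          (fun e => if ε e then e2 e else e1 e) q y z)
    (P : MvPolynomial (Fin 2) ℚ)
    (hP : ∀ q : ℕ, 0 < q → ∀ y : ℚ,
      MvPolynomial.eval ![(q : ℚ), y] P =
        ∑ f : V → Fin q, y ^ (Finset.univ.filter (fun e => f (e1 e) ≠ f (e2 e))).card) :
    ∀ q y z : ℚ,
      ∑ ε : E → Bool, MvPolynomial.eval ![q, y, z] (B ε) =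
        2 ^ (Fintype.card E) * MvPolynomial.eval ![q, (y + z) / 2] P := by
  intro q y z
  set pB : ℚ[X] :=
    ∑ ε, (MvPolynomial.finSuccEquiv ℚ 2 (B ε)).map (MvPolynomial.eval ![y, z])
  set pP : ℚ[X] := 2 ^ Fintype.card E *
    (MvPolynomial.finSuccEquiv ℚ 1 P).map (MvPolynomial.eval ![(y + z) / 2])
  have eval_pB (x : ℚ) : pB.eval x = ∑ ε, MvPolynomial.eval ![x, y, z] (B ε) := by
    simp only [pB, eval_finsetSum, MvPolynomial.eval_vecCons]
  have eval_pP (x : ℚ) :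
      pP.eval x = 2 ^ Fintype.card E * MvPolynomial.eval ![x, (y + z) / 2] P := by
    simp only [pP, eval_mul, eval_pow, eval_ofNat, MvPolynomial.eval_vecCons]
  have hpB_eq_pP : pB = pP := eq_of_eval_natCast_eq fun n hn => by
    simp only [eval_pB, eval_pP, hB _ n hn, hP n hn]
    exact sum_colorSum_orientations V E e1 e2 n y z
  rw [← eval_pB, ← eval_pP, hpB_eq_pP]
end

section
/- Let D = (V,A) be a digraph. Then, as polynomials in y, Σ_{S ⊆ A : D∖S acyclic} y^{|A∖S|} = (−1)^{|V|} · B_D(−1, 1+y, 1), where D∖S is the digraph obtained from D by deleting the arcs in S, and B_D(−1, 1+y, 1) denotes the evaluation of the B-polynomial of D at q = −1, y replaced by 1+y, and z = 1. -/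
open Finset

/-- A digraph (arcs `A`, source map `s`, target map `t`) contains a directed cycle. -/
def HasDicycle {V A : Type} (s t : A → V) : Prop :=
  ∃ n : ℕ, 0 < n ∧ ∃ c : ZMod n → A, ∀ i, t (c i) = s (c (i + 1))

open scoped Classical

/-!
Expanding `(1 + y) ^ #ascents = ∑_{T ⊆ ascents} y ^ #T` gives
`B_D(q, 1 + y, 1) = ∑_T y ^ #T · Ω_T(q)`, where `Ω_T(q)` counts the `q`-colourings that strictly
increase along every arc of `T`. The top colour class of such a colouring is an arbitrary set of
sinks `U`, so `Ω_X(q + 1) = ∑_{U ⊆ sinks X} Ω_{X \ U}(q)`; hence `Ω_X(q) = ∑_k C(q, k) p_k(X)`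
with `p_k(X)` the number of ways to peel `X` into `k` nonempty layers of sinks, and `Ω_X` is a
polynomial. At `q = -1` the same peeling recursion together with `∑_{U ⊆ Z} (-1) ^ #U = [Z = ∅]`
gives `Ω_T(-1) = (-1) ^ #V` when `T` is acyclic (every nonempty vertex set has a sink) and `0`
otherwise. Since `B` and `∑_T y ^ #T · Ω_T` agree at all positive integers, they agree at `-1`.
-/

theorem neg_one_pow_card_sdiff {R V : Type*} [Ring R] {X U : Finset V} (h : U ⊆ X) :
    (-1 : R) ^ #(X \ U) = (-1) ^ #X * (-1) ^ #U := by
  rw [← card_sdiff_add_card_eq_card h, pow_add, mul_assoc, ← pow_add, Even.neg_one_pow ⟨_, rfl⟩,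
    mul_one]

theorem sum_range_choose_succ_mul (b : ℕ → ℕ) (q n : ℕ) :
    ∑ k ∈ range (n + 1), (q + 1).choose k * b k =
      ∑ k ∈ range (n + 1), q.choose k * b k + ∑ k ∈ range n, q.choose k * b (k + 1) := by
  induction n with
  | zero => simp
  | succ n ih =>
    rw [sum_range_succ, ih, Nat.choose_succ_succ,
      sum_range_succ (fun k => q.choose k * b k) (n + 1), sum_range_succ (fun k => q.choose k * b (k + 1))]
    ring

theorem Function.IsPeriodicPt.exists_zmod_cycle {α : Type*} {f : α → α} {n : ℕ} {x : α}
    (hx : Function.IsPeriodicPt f n x) (hn : 0 < n) :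
    ∃ c : ZMod n → α, ∀ i, c (i + 1) = f (c i) := by
  have : NeZero n := ⟨hn.ne'⟩
  refine ⟨fun i => f^[i.val] x, fun i => ?_⟩
  have hval : (i + 1).val = (i.val + 1) % n := by
    rw [← ZMod.val_natCast, Nat.cast_succ, ZMod.natCast_zmod_val]
  simp only
  rw [hval, hx.iterate_mod_apply, Function.iterate_succ_apply']

theorem Finite.exists_isPeriodicPt {α : Type*} [Finite α] [Nonempty α] (f : α → α) :
    ∃ x n, 0 < n ∧ Function.IsPeriodicPt f n x := by
  obtain ⟨x₀⟩ := ‹Nonempty α›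
  obtain ⟨i, j, hij, h⟩ := Finite.exists_ne_map_eq_of_infinite fun m : ℕ => f^[m] x₀
  wlog hlt : i < j generalizing i j
  · exact this j i hij.symm h.symm (hij.lt_or_gt.resolve_left hlt)
  refine ⟨f^[i] x₀, j - i, Nat.sub_pos_of_lt hlt, ?_⟩
  rw [Function.IsPeriodicPt, Function.IsFixedPt, ← Function.iterate_add_apply,
    Nat.sub_add_cancel hlt.le]
  exact h.symm

open Polynomial in
theorem Polynomial.eval_mvPolynomial_aeval {R σ : Type*} [CommSemiring R] (f : σ → R[X])
    (p : MvPolynomial σ R) (c : R) :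
    (MvPolynomial.aeval f p).eval c = MvPolynomial.eval (fun i => (f i).eval c) p := by
  rw [← coe_aeval_eq_eval, MvPolynomial.comp_aeval_apply]
  rfl

noncomputable section StrictColorings

variable {V : Type*} (r : V → V → Prop)

def strictColorings (X : Finset V) (q : ℕ) : Finset (X → Fin q) :=
  {f | ∀ x y : X, r x y → f x < f y}

def sinks (X : Finset V) : Finset V :=
  {x ∈ X | ∀ y ∈ X, ¬ r x y}

def AcyclicOn (X : Finset V) : Prop :=
  ∀ Y ⊆ X, Y.Nonempty → ∃ y ∈ Y, ∀ z ∈ Y, ¬ r y z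

variable {r}

theorem sinks_subset (X : Finset V) : sinks r X ⊆ X :=
  filter_subset _ _

theorem AcyclicOn.mono {X Y : Finset V} (hX : AcyclicOn r X) (hYX : Y ⊆ X) : AcyclicOn r Y :=
  fun Z hZY => hX Z (hZY.trans hYX)

theorem AcyclicOn.sinks_nonempty {X : Finset V} (hX : AcyclicOn r X) (hne : X.Nonempty) :
    (sinks r X).Nonempty := by
  obtain ⟨x, hx, hsink⟩ := hX X subset_rfl hne
  exact ⟨x, mem_filter.2 ⟨hx, hsink⟩⟩

def topClass {X : Finset V} {q : ℕ} (f : X → Fin (q + 1)) : Finset V :=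
  {x ∈ X | ∃ h : x ∈ X, f ⟨x, h⟩ = Fin.last q}

theorem mem_topClass {X : Finset V} {q : ℕ} {f : X → Fin (q + 1)} {x : X} :
    x.1 ∈ topClass f ↔ f x = Fin.last q := by
  simp [topClass]

theorem topClass_mem_powerset_sinks {X : Finset V} {q : ℕ} {f : X → Fin (q + 1)}
    (hf : f ∈ strictColorings r X (q + 1)) : topClass f ∈ (sinks r X).powerset := by
  refine mem_powerset.2 fun x hx => ?_
  obtain ⟨-, hx, hlast⟩ := mem_filter.1 hx
  refine mem_filter.2 ⟨hx, fun y hy hxy => ?_⟩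
  have hlt := (mem_filter.1 hf).2 ⟨x, hx⟩ ⟨y, hy⟩ hxy
  exact (Fin.le_last _).not_gt (hlast ▸ hlt)

theorem card_strictColorings_topClass_eq {X U : Finset V} (hU : U ⊆ sinks r X) (q : ℕ) :
    #{f ∈ strictColorings r X (q + 1) | topClass f = U} = #(strictColorings r (X \ U) q) := by
  have hUX : U ⊆ X := hU.trans (sinks_subset X)
  have hsink : ∀ x ∈ U, ∀ y ∈ X, ¬ r x y := fun x hx => (mem_filter.1 (hU hx)).2
  refine card_bij' (fun f hf x => (f ⟨x, (mem_sdiff.1 x.2).1⟩).castPred fun h => ?_)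
    (fun g _ x => if h : x.1 ∈ U then Fin.last q else (g ⟨x, mem_sdiff.2 ⟨x.2, h⟩⟩).castSucc)
    ?_ ?_ ?_ ?_
  · obtain ⟨-, rfl⟩ := mem_filter.1 hf
    exact (mem_sdiff.1 x.2).2 (mem_topClass.2 h)
  · intro f hf
    obtain ⟨hf, -⟩ := mem_filter.1 hf
    simp only [strictColorings, mem_filter, mem_univ, true_and] at hf ⊢
    intro x y hxy
    exact Fin.castPred_lt_castPred_iff.2 (hf _ _ hxy)
  · intro g hg
    simp only [strictColorings, mem_filter, mem_univ, true_and] at hg ⊢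
    refine ⟨fun x y hxy => ?_, ?_⟩
    · by_cases hx : x.1 ∈ U
      · exact absurd hxy (hsink x hx y y.2)
      by_cases hy : y.1 ∈ U
      · simp [hx, hy]
      · simpa [hx, hy] using hg _ _ hxy
    · ext x
      by_cases hx : x ∈ X
      · rw [show x = (⟨x, hx⟩ : X).1 from rfl, mem_topClass]
        by_cases hxU : x ∈ U <;> simp [hxU, Fin.castSucc_ne_last]
      · exact iff_of_false (fun h => hx (mem_filter.1 h).1) fun h => hx (hUX h)
  · intro f hf
    obtain ⟨-, rfl⟩ := mem_filter.1 hf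
    funext x
    by_cases hx : x.1 ∈ topClass f
    · simp [hx, (mem_topClass.1 hx).symm]
    · simp [hx]
  · intro g _
    funext x
    simp [(mem_sdiff.1 x.2).2]

variable (r)

theorem card_strictColorings_succ (X : Finset V) (q : ℕ) :
    #(strictColorings r X (q + 1)) =
      ∑ U ∈ (sinks r X).powerset, #(strictColorings r (X \ U) q) := by
  rw [card_eq_sum_card_fiberwise fun f hf => topClass_mem_powerset_sinks hf]
  exact sum_congr rfl fun U hU => card_strictColorings_topClass_eq (mem_powerset.1 hU) q

theorem card_strictColorings_zero (X : Finset V) :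
    #(strictColorings r X 0) = if X = ∅ then 1 else 0 := by
  split_ifs with hX
  · subst hX
    simp [strictColorings]
  · obtain ⟨x, hx⟩ := nonempty_iff_ne_empty.2 hX
    exact card_eq_zero.2 (eq_empty_of_forall_notMem fun f _ => (f ⟨x, hx⟩).elim0)

end StrictColorings

noncomputable section SinkPeelings

variable {V : Type*} (r : V → V → Prop)

/-- The number of ways to remove `X` in `k` nonempty layers, each a set of sinks of what is left;
equivalently, the number of strict colourings of `X` using each of `k` colours. -/
def sinkPeelings : ℕ → Finset V → ℕ
  | 0, X => if X = ∅ then 1 else 0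
  | k + 1, X => ∑ U ∈ (sinks r X).powerset.erase ∅, sinkPeelings k (X \ U)

theorem sum_powerset_sinks_sinkPeelings (k : ℕ) (X : Finset V) :
    ∑ U ∈ (sinks r X).powerset, sinkPeelings r k (X \ U) =
      sinkPeelings r k X + sinkPeelings r (k + 1) X := by
  rw [← add_sum_erase _ _ (empty_mem_powerset _), sdiff_empty, sinkPeelings]

theorem card_sdiff_lt_of_mem_erase_empty {X U : Finset V}
    (hU : U ∈ (sinks r X).powerset.erase ∅) : #(X \ U) < #X := by
  obtain ⟨hne, hU⟩ := mem_erase.1 hU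
  exact card_lt_card (sdiff_ssubset ((mem_powerset.1 hU).trans (sinks_subset X))
    (nonempty_iff_ne_empty.2 hne))

theorem sinkPeelings_eq_zero_of_card_lt {k : ℕ} {X : Finset V} (h : #X < k) :
    sinkPeelings r k X = 0 := by
  induction k generalizing X with
  | zero => omega
  | succ k ih =>
    exact sum_eq_zero fun U hU =>
      ih (by have := card_sdiff_lt_of_mem_erase_empty r hU; omega)

def acyclicSign (X : Finset V) : ℤ :=
  if AcyclicOn r X then (-1) ^ #X else 0

theorem acyclicSign_eq (X : Finset V) :
    acyclicSign r X =
      (if X = ∅ then 1 else 0) - ∑ U ∈ (sinks r X).powerset.erase ∅, acyclicSign r (X \ U) := by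
  by_cases hX : AcyclicOn r X
  · have hterm : ∀ U ∈ (sinks r X).powerset.erase ∅,
        acyclicSign r (X \ U) = (-1) ^ #X * (-1) ^ #U := fun U hU => by
      have hUX := (mem_powerset.1 (mem_of_mem_erase hU)).trans (sinks_subset X)
      rw [acyclicSign, if_pos (hX.mono sdiff_subset), neg_one_pow_card_sdiff hUX]
    rw [sum_congr rfl hterm, ← mul_sum, sum_erase_eq_sub (empty_mem_powerset _),
      sum_powerset_neg_one_pow_card, acyclicSign, if_pos hX]
    rcases X.eq_empty_or_nonempty with rfl | hne
    · simp [sinks]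
    · rw [if_neg hne.ne_empty, if_neg (hX.sinks_nonempty hne).ne_empty]
      simp
  · obtain ⟨Y, hYX, hYne, hY⟩ : ∃ Y ⊆ X, Y.Nonempty ∧ ∀ y ∈ Y, ∃ z ∈ Y, r y z := by
      simpa [AcyclicOn] using hX
    rw [acyclicSign, if_neg hX, if_neg (hYne.mono hYX).ne_empty, zero_sub, eq_comm, neg_eq_zero]
    refine sum_eq_zero fun U hU => if_neg fun hacyc => ?_
    -- no vertex of the sink-free set `Y` is a sink of `X`, so `Y` survives in `X \ U`
    have hYU : Y ⊆ X \ U := fun y hy => mem_sdiff.2 ⟨hYX hy, fun hyU => by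
      obtain ⟨z, hz, hyz⟩ := hY y hy
      exact (mem_filter.1 (mem_powerset.1 (mem_of_mem_erase hU) hyU)).2 z (hYX hz) hyz⟩
    obtain ⟨y, hy, hsink⟩ := hacyc Y hYU hYne
    obtain ⟨z, hz, hyz⟩ := hY y hy
    exact hsink z hz hyz

theorem sum_range_neg_one_pow_mul_sinkPeelings {n : ℕ} {X : Finset V} (hX : #X ≤ n) :
    ∑ k ∈ range (n + 1), (-1 : ℤ) ^ k * sinkPeelings r k X = acyclicSign r X := by
  induction n generalizing X with
  | zero =>
    obtain rfl := card_eq_zero.1 (Nat.le_zero.1 hX)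
    simp [sinkPeelings, acyclicSign, AcyclicOn]
  | succ n ih =>
    have hsub : ∀ U ∈ (sinks r X).powerset.erase ∅,
        ∑ k ∈ range (n + 1), (-1 : ℤ) ^ k * sinkPeelings r k (X \ U) = acyclicSign r (X \ U) :=
      fun U hU => ih (by have := card_sdiff_lt_of_mem_erase_empty r hU; omega)
    rw [sum_range_succ', acyclicSign_eq, ← sum_congr rfl hsub, sum_comm]
    simp only [sinkPeelings, pow_succ, Nat.cast_sum, mul_sum, pow_zero, one_mul, Nat.cast_ite,
      Nat.cast_one, Nat.cast_zero, mul_neg_one, neg_mul, sum_neg_distrib]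
    rw [add_comm, sub_eq_add_neg]

theorem card_strictColorings_eq_sum_choose_mul_sinkPeelings (q : ℕ) {n : ℕ} {X : Finset V}
    (hX : #X ≤ n) :
    #(strictColorings r X q) = ∑ k ∈ range (n + 1), q.choose k * sinkPeelings r k X := by
  induction q generalizing X with
  | zero => simp [sum_range_succ', card_strictColorings_zero, sinkPeelings]
  | succ q ih =>
    have hsub : ∀ U ∈ (sinks r X).powerset, #(strictColorings r (X \ U) q) =
        ∑ k ∈ range (n + 1), q.choose k * sinkPeelings r k (X \ U) :=
      fun U _ => ih ((card_le_card sdiff_subset).trans hX)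
    rw [card_strictColorings_succ, sum_congr rfl hsub, sum_comm]
    simp only [← mul_sum, sum_powerset_sinks_sinkPeelings, mul_add, sum_add_distrib]
    rw [sum_range_choose_succ_mul, sum_range_succ (fun k => q.choose k * sinkPeelings r (k + 1) X),
      sinkPeelings_eq_zero_of_card_lt r (Nat.lt_succ_of_le hX), mul_zero, add_zero]

end SinkPeelings

open Polynomial

noncomputable section StrictOrderPolynomial

variable (K : Type*) [Field K]

def choosePoly (k : ℕ) : K[X] :=
  C (k.factorial : K)⁻¹ * descPochhammer K k

variable {V : Type*} (r : V → V → Prop)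

def strictOrderPoly (X : Finset V) : K[X] :=
  ∑ k ∈ range (#X + 1), C (sinkPeelings r k X : K) * choosePoly K k

variable [CharZero K]

theorem choosePoly_eval_natCast (q k : ℕ) : (choosePoly K k).eval (q : K) = q.choose k := by
  rw [choosePoly, eval_mul, eval_C, Nat.cast_choose_eq_descPochhammer_div, div_eq_inv_mul]

theorem choosePoly_eval_neg_one (k : ℕ) : (choosePoly K k).eval (-1) = (-1) ^ k := by
  have h := ascPochhammer_eval_neg_eq_descPochhammer K (-1) k
  rw [neg_neg, ascPochhammer_eval_one] at h
  have hk : (k.factorial : K) ≠ 0 := Nat.cast_ne_zero.2 k.factorial_ne_zero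
  rw [choosePoly, eval_mul, eval_C, inv_mul_eq_iff_eq_mul₀ hk, h, mul_right_comm, ← pow_add,
    Even.neg_one_pow ⟨k, rfl⟩, one_mul]

theorem strictOrderPoly_eval_natCast (X : Finset V) (q : ℕ) :
    (strictOrderPoly K r X).eval (q : K) = #(strictColorings r X q) := by
  simp only [strictOrderPoly, eval_finsetSum, eval_mul, eval_C, choosePoly_eval_natCast,
    card_strictColorings_eq_sum_choose_mul_sinkPeelings r q le_rfl, Nat.cast_sum, Nat.cast_mul,
    mul_comm]

theorem strictOrderPoly_eval_neg_one (X : Finset V) :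
    (strictOrderPoly K r X).eval (-1) = acyclicSign r X := by
  simp only [strictOrderPoly, eval_finsetSum, eval_mul, eval_C, choosePoly_eval_neg_one,
    ← sum_range_neg_one_pow_mul_sinkPeelings r le_rfl, Int.cast_sum, Int.cast_mul, Int.cast_pow,
    Int.cast_neg, Int.cast_one, Int.cast_natCast, mul_comm]

end StrictOrderPolynomial

def arcRel {V A : Type*} (s t : A → V) (T : Finset A) (x y : V) : Prop :=
  ∃ a ∈ T, s a = x ∧ t a = y

theorem card_strictColorings_arcRel_univ {V A : Type*} [Fintype V] [DecidableEq V] [Fintype A]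
    (s t : A → V) (T : Finset A) (q : ℕ) :
    #(strictColorings (arcRel s t T) univ q) =
      #{f : V → Fin q | T ⊆ univ.filter fun a => f (s a) < f (t a)} := by
  refine card_equiv ((Equiv.subtypeUnivEquiv mem_univ).arrowCongr (Equiv.refl _)) fun f => ?_
  simp [strictColorings, arcRel, subset_iff]
  exact ⟨fun h a ha => h _ _ a ha rfl rfl, fun h _ _ a ha hs ht => hs ▸ ht ▸ h ha⟩

section Digraph

variable {V A : Type} [Fintype V] (s t : A → V)

theorem hasDicycle_iff_not_acyclicOn_univ :
    HasDicycle s t ↔ ¬ AcyclicOn (fun x y => ∃ a, s a = x ∧ t a = y) univ := by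
  constructor
  · rintro ⟨n, hn, c, hc⟩ hacyc
    have : NeZero n := ⟨hn.ne'⟩
    obtain ⟨_, hy, hsink⟩ := hacyc (univ.image (s ∘ c)) (subset_univ _) (univ_nonempty.image _)
    obtain ⟨i, -, rfl⟩ := mem_image.1 hy
    exact hsink _ (mem_image_of_mem _ (mem_univ (i + 1))) ⟨c i, rfl, hc i⟩
  · intro h
    obtain ⟨Y, -, hYne, hY⟩ :
        ∃ Y ⊆ univ, Y.Nonempty ∧ ∀ y ∈ Y, ∃ z ∈ Y, ∃ a, s a = y ∧ t a = z := by
      simpa [AcyclicOn] using h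
    have harc : ∀ y : Y, ∃ a, s a = y ∧ t a ∈ Y := fun y => by
      obtain ⟨z, hz, a, hs, rfl⟩ := hY y y.2
      exact ⟨a, hs, hz⟩
    choose arc hs ht using harc
    have : Nonempty Y := hYne.to_subtype
    obtain ⟨x, n, hn, hx⟩ := Finite.exists_isPeriodicPt fun y : Y => (⟨t (arc y), ht y⟩ : Y)
    obtain ⟨c, hc⟩ := hx.exists_zmod_cycle hn
    exact ⟨n, hn, arc ∘ c, fun i => by simp [hc, hs]⟩

theorem hasDicycle_deleteArcs_iff [Fintype A] [DecidableEq A] (S : Finset A) :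
    HasDicycle (fun b : {a : A // a ∉ S} => s b.1) (fun b : {a : A // a ∉ S} => t b.1) ↔
      ¬ AcyclicOn (arcRel s t Sᶜ) univ := by
  rw [hasDicycle_iff_not_acyclicOn_univ]
  congr!
  simp [arcRel, and_left_comm]

theorem colorSum_one_add_one [DecidableEq V] [Fintype A] (q : ℕ) (y : ℚ) :
    colorSum V A s t q (1 + y) 1 =
      ∑ T : Finset A, y ^ #T * #(strictColorings (arcRel s t T) univ q) := by
  have hexp : ∀ f : V → Fin q, (1 + y) ^ #{a | f (s a) < f (t a)} =
      ∑ T ∈ (univ.filter fun a => f (s a) < f (t a)).powerset, y ^ #T := fun f => by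
    simpa using prod_one_add (f := fun _ => y) (univ.filter fun a => f (s a) < f (t a))
  simp only [colorSum, one_pow, mul_one, hexp, card_strictColorings_arcRel_univ]
  rw [sum_comm' (t' := univ)
    (s' := fun T => {f : V → Fin q | T ⊆ univ.filter fun a => f (s a) < f (t a)})]
  · simp only [sum_const, nsmul_eq_mul, mul_comm]
  · simp

end Digraph

/-- for a digraph `D = (V,A)`, as polynomials in `y` (stated for all
rational `y`): `Σ_{S ⊆ A : D∖S acyclic} y^{|A∖S|} = (−1)^{|V|} · B_D(−1, 1+y, 1)`,
where `D∖S` deletes the arcs in `S`. -/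
theorem acyclic_subgraphs_gen_function
    (V A : Type) [Fintype V] [DecidableEq V] [Fintype A] [DecidableEq A]
    (s t : A → V)
    (B : MvPolynomial (Fin 3) ℚ)
    (hB : ∀ q : ℕ, 0 < q → ∀ y z : ℚ,
      MvPolynomial.eval ![(q : ℚ), y, z] B = colorSum V A s t q y z) :
    ∀ y : ℚ,
      ∑ S ∈ (Finset.univ : Finset (Finset A)).filter
          (fun S => ¬ HasDicycle
            (fun b : {a : A // a ∉ S} => s b.1)
            (fun b : {a : A // a ∉ S} => t b.1)),
        y ^ (Sᶜ : Finset A).card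
      = (-1 : ℚ) ^ (Fintype.card V) *
        MvPolynomial.eval ![(-1 : ℚ), 1 + y, 1] B := by
  intro y
  set P : ℚ[X] := ∑ T : Finset A, C (y ^ #T) * strictOrderPoly ℚ (arcRel s t T) univ
  have hBeval : ∀ c : ℚ, MvPolynomial.eval ![c, 1 + y, 1] B =
      (MvPolynomial.aeval ![X, C (1 + y), C 1] B).eval c := fun c => by
    rw [eval_mvPolynomial_aeval]
    congr! with i
    fin_cases i <;> simp
  have hBP : MvPolynomial.aeval ![X, C (1 + y), C 1] B = P := by
    refine eq_of_infinite_eval_eq _ _ (Set.infinite_of_injective_forall_mem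
      (f := fun m : ℕ => ((m + 1 : ℕ) : ℚ)) (fun m n h => by simpa using h) fun m => ?_)
    simp only [Set.mem_ofPred_eq, ← hBeval, hB _ m.succ_pos, colorSum_one_add_one, P,
      eval_finsetSum, eval_mul, eval_C, strictOrderPoly_eval_natCast]
  simp only [hBeval, hBP, P, eval_finsetSum, eval_mul, eval_C, strictOrderPoly_eval_neg_one,
    acyclicSign, card_univ, mul_sum, sum_filter, hasDicycle_deleteArcs_iff, not_not]
  refine Fintype.sum_bijective compl compl_bijective _ _ fun S => ?_
  split_ifs
  · push_cast
    rw [mul_left_comm, ← pow_add, Even.neg_one_pow ⟨_, rfl⟩, mul_one]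
  · simp
end
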